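/- arXiv:1509.04111 — 3 statements merged into one kernel-verified Lean document; each statement's English description precedes it below -/
import Mathlib

section
/- Let ψ be a solution of the scalar sojourn-time recursion with 0 ≤ ψ(n,m) ≤ 1 for all n, m, let z be a real number with 0 ≤ z < 1, and define φ(z,m) = Σ_{h=0}^∞ ψ(K+h+1,m)·z^h. Then for every m with 0 ≤ m ≤ K, φ(z,m) = Σ_{h=0}^{K−1−m} (μ1·λ^h/(λ+μ1·(1−z)+s)^{h+1})·ψ(K,m+h) + (λ/(λ+μ1·(1−z)+s))^{K−m} · (μ1/(μ1+s))^{K+1} · (μ1+s)/(μ1·(1−z)+s). -/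
/-!
Multiplying the recursion in row `m` at the levels `n = K + h + 1 > K` by `z ^ h` and summing
over `h` gives the first-order recurrence
`(λ + μ1 (1 - z) + s) φ(z,m) = μ1 ψ(K,m) + λ φ(z,m+1)` in `m`.
In the last row `m = K` the values `ψ(n,K)` are geometric in `n`, so `φ(z,K)` is a geometric
series; unrolling the recurrence from `m` up to `K` yields the closed form.
-/

open Finset

theorem eq_geom_sum_add_of_mul_eq_add_mul {F : Type*} [Field F] {a b : F} (ha : a ≠ 0)
    {f c : ℕ → F} (m d : ℕ)
    (hrec : ∀ i < d, a * f (m + i) = c (m + i) + b * f (m + i + 1)) :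
    f m = ∑ h ∈ range d, b ^ h / a ^ (h + 1) * c (m + h) + (b / a) ^ d * f (m + d) := by
  induction d with
  | zero => simp
  | succ d ih =>
    have hstep : f (m + d) = c (m + d) / a + b / a * f (m + d + 1) := by
      field_simp
      linear_combination hrec d d.lt_succ_self
    rw [ih fun i hi => hrec i (by omega), hstep, sum_range_succ, ← add_assoc m d 1]
    ring

theorem summable_mul_pow_of_norm_le {u : ℕ → ℝ} {C z : ℝ} (hu : ∀ h, ‖u h‖ ≤ C)
    (hz : ‖z‖ < 1) :
    Summable fun h => u h * z ^ h :=
  .of_norm_bounded ((summable_geometric_of_lt_one (norm_nonneg z) hz).mul_left C) fun h => by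
    rw [norm_mul, norm_pow]
    exact mul_le_mul_of_nonneg_right (hu h) (by positivity)

theorem sub_mul_tsum_tail_eq_of_recurrence {a p q z : ℝ} {u v : ℕ → ℝ} {N : ℕ}
    (hu : Summable fun h => u (N + h) * z ^ h) (hv : Summable fun h => v (N + h + 1) * z ^ h)
    (hrec : ∀ h, a * u (N + h + 1) = q * u (N + h) + p * v (N + h + 1)) :
    (a - q * z) * ∑' h, u (N + h + 1) * z ^ h = q * u N + p * ∑' h, v (N + h + 1) * z ^ h := by
  have hshift : ∑' h, u (N + h) * z ^ h = u N + z * ∑' h, u (N + h + 1) * z ^ h := by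
    rw [hu.tsum_eq_zero_add, ← tsum_mul_left]
    simp only [add_zero, pow_zero, mul_one, pow_succ, ← add_assoc]
    congr 1
    exact tsum_congr fun h => by ring
  have hsum : a * ∑' h, u (N + h + 1) * z ^ h
      = q * ∑' h, u (N + h) * z ^ h + p * ∑' h, v (N + h + 1) * z ^ h := by
    rw [← tsum_mul_left, ← tsum_mul_left, ← tsum_mul_left,
      ← (hu.mul_left q).tsum_add (hv.mul_left p)]
    exact tsum_congr fun h => by linear_combination z ^ h * hrec h
  rw [hshift] at hsum
  linear_combination hsum

theorem tsum_pow_add_succ_mul_pow {r z : ℝ} (N : ℕ) (hrz : ‖r * z‖ < 1) :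
    ∑' h, r ^ (N + h + 1) * z ^ h = r ^ (N + 1) * (1 - r * z)⁻¹ := by
  rw [← tsum_geometric_of_norm_lt_one hrz, ← tsum_mul_left]
  exact tsum_congr fun h => by ring

theorem mul_tsum_tail_eq_of_forall_mul_eq {lam mu1 s z : ℝ} {K : ℕ} {ψ : ℕ → ℕ → ℝ}
    (hgt : ∀ n m, 1 ≤ n → K < n + m →
      (lam + mu1 + s) * ψ n m = mu1 * ψ (n - 1) m + lam * ψ n (m + 1))
    (hsum : ∀ N m, Summable fun h => ψ (N + h) m * z ^ h) (m : ℕ) :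
    (lam + mu1 * (1 - z) + s) * ∑' h, ψ (K + h + 1) m * z ^ h
      = mu1 * ψ K m + lam * ∑' h, ψ (K + h + 1) (m + 1) * z ^ h := by
  have hv : Summable fun h => ψ (K + h + 1) (m + 1) * z ^ h := by
    simpa only [add_right_comm] using hsum (K + 1) (m + 1)
  have hrow := sub_mul_tsum_tail_eq_of_recurrence (a := lam + mu1 + s) (p := lam) (q := mu1)
    (u := fun n => ψ n m) (v := fun n => ψ n (m + 1)) (N := K) (hsum K m) hv
    fun h => by simpa using hgt (K + h + 1) m (by omega) (by omega)
  linear_combination hrow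

theorem tsum_pow_add_succ_mul_pow_of_lt_one {mu1 s z : ℝ} (K : ℕ) (hmu1 : 0 < mu1) (hs : 0 < s)
    (hz0 : 0 ≤ z) (hz1 : z < 1) :
    ∑' h, (mu1 / (mu1 + s)) ^ (K + h + 1) * z ^ h
      = (mu1 / (mu1 + s)) ^ (K + 1) * ((mu1 + s) / (mu1 * (1 - z) + s)) := by
  have hr : ‖mu1 / (mu1 + s) * z‖ < 1 := by
    rw [Real.norm_of_nonneg (by positivity), div_mul_eq_mul_div, div_lt_one (by positivity)]
    nlinarith
  have hden : 1 - mu1 / (mu1 + s) * z = (mu1 * (1 - z) + s) / (mu1 + s) := by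
    field_simp
    ring
  rw [tsum_pow_add_succ_mul_pow K hr, hden, inv_div]

theorem statement4_general (lam mu1 s : ℝ) (K : ℕ)
    (hlam : 0 < lam) (hmu1 : 0 < mu1) (hs : 0 < s)
    (ψ : ℕ → ℕ → ℝ)
    (hgt : ∀ n m, 1 ≤ n → K < n + m →
      (lam + mu1 + s) * ψ n m = mu1 * ψ (n - 1) m + lam * ψ n (m + 1))
    (hhi : ∀ n m, K ≤ m → ψ n m = (mu1 / (mu1 + s)) ^ n)
    (hbd : ∀ n m, 0 ≤ ψ n m ∧ ψ n m ≤ 1)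
    (z : ℝ) (hz0 : 0 ≤ z) (hz1 : z < 1) :
    ∀ m : ℕ, m ≤ K →
      (∑' h : ℕ, ψ (K + h + 1) m * z ^ h) =
        (∑ h ∈ Finset.range (K - m),
          mu1 * lam ^ h / (lam + mu1 * (1 - z) + s) ^ (h + 1) * ψ K (m + h)) +
        (lam / (lam + mu1 * (1 - z) + s)) ^ (K - m) * (mu1 / (mu1 + s)) ^ (K + 1) *
          ((mu1 + s) / (mu1 * (1 - z) + s)) := by
  intro m hm
  have hz : 0 < 1 - z := by linarith
  have hA : lam + mu1 * (1 - z) + s ≠ 0 := by positivity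
  have hsum : ∀ N m, Summable fun h => ψ (N + h) m * z ^ h := fun N m =>
    summable_mul_pow_of_norm_le (u := fun h => ψ (N + h) m) (C := 1)
      (fun h => (Real.norm_of_nonneg (hbd _ _).1).trans_le (hbd _ _).2)
      (by rwa [Real.norm_of_nonneg hz0])
  have hlast : ∑' h, ψ (K + h + 1) K * z ^ h
      = (mu1 / (mu1 + s)) ^ (K + 1) * ((mu1 + s) / (mu1 * (1 - z) + s)) := by
    simp_rw [hhi _ K le_rfl]
    exact tsum_pow_add_succ_mul_pow_of_lt_one K hmu1 hs hz0 hz1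
  rw [eq_geom_sum_add_of_mul_eq_add_mul (f := fun i => ∑' h, ψ (K + h + 1) i * z ^ h)
      (c := fun i => mu1 * ψ K i) hA m (K - m)
      fun i _ => mul_tsum_tail_eq_of_forall_mul_eq hgt hsum (m + i),
    Nat.add_sub_cancel' hm, hlast]
  congr 1
  · exact sum_congr rfl fun h _ => by ring
  · ring

/-- closed form of φ(z,m) for 0 ≤ m ≤ K. -/
theorem statement4 (lam mu0 mu1 s : ℝ) (K : ℕ)
    (hlam : 0 < lam) (hmu0 : 0 < mu0) (hmu1 : 0 < mu1) (hs : 0 < s) (hK : 1 ≤ K)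
    (ψ : ℕ → ℕ → ℝ)
    (h0 : ∀ m, ψ 0 m = 1)
    (hle : ∀ n m, 1 ≤ n → n + m ≤ K →
      (lam + mu0 + s) * ψ n m = mu0 * ψ (n - 1) m + lam * ψ n (m + 1))
    (hgt : ∀ n m, 1 ≤ n → K < n + m →
      (lam + mu1 + s) * ψ n m = mu1 * ψ (n - 1) m + lam * ψ n (m + 1))
    (hhi : ∀ n m, K ≤ m → ψ n m = (mu1 / (mu1 + s)) ^ n)
    (hbd : ∀ n m, 0 ≤ ψ n m ∧ ψ n m ≤ 1)
    (z : ℝ) (hz0 : 0 ≤ z) (hz1 : z < 1) :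
    ∀ m : ℕ, m ≤ K →
      (∑' h : ℕ, ψ (K + h + 1) m * z ^ h) =
        (∑ h ∈ Finset.range (K - m),
          mu1 * lam ^ h / (lam + mu1 * (1 - z) + s) ^ (h + 1) * ψ K (m + h)) +
        (lam / (lam + mu1 * (1 - z) + s)) ^ (K - m) * (mu1 / (mu1 + s)) ^ (K + 1) *
          ((mu1 + s) / (mu1 * (1 - z) + s)) :=
  statement4_general lam mu1 s K hlam hmu1 hs ψ hgt hhi hbd z hz0 hz1
end

section
/- Assume additionally λ < μ1. Let ψ be a solution of the scalar sojourn-time recursion with 0 ≤ ψ(n,m) ≤ 1 for all n, m. Then the series Σ_{n=0}^∞ ψ(n+1,0)·π_n converges and equals π_0 · Σ_{h=0}^{K−1} [ (λ/μ0)^h·ψ(h+1,0) + (λ/μ0)^K·(λ/μ1)^h·(μ1/(μ1+s))^{h+1}·ψ(K,h) ] + π_0·(λ/μ0)^K·(λ/μ1)^K·(μ1/(μ1−λ))·(μ1/(μ1+s))^{2K}·(μ1−λ)/(μ1−λ+s). -/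
/-!
Splitting the series at `K`, the head is a finite sum and the tail is
`π_K · H 0` with `H m = ∑ⱼ (λ/μ₁)ʲ ψ(K+j+1, m)` (`tailGF`). Summing the recursion of the
region `n > K` against `(λ/μ₁)ʲ` gives `H m = β ψ(K,m) + (λ/(μ₁+s)) H(m+1)` with
`β = μ₁/(μ₁+s)`; unrolling it `K` times reaches `H K`, a geometric series since
`ψ(n,K) = βⁿ`.
-/

noncomputable def pi0 (lam mu0 mu1 : ℝ) (K : ℕ) : ℝ :=
  ((∑ n ∈ Finset.range (K + 1), (lam / mu0) ^ n) + lam / (mu1 - lam) * (lam / mu0) ^ K)⁻¹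

noncomputable def piStat (lam mu0 mu1 : ℝ) (K n : ℕ) : ℝ :=
  if n ≤ K then (lam / mu0) ^ n * pi0 lam mu0 mu1 K
  else (mu1 / mu0) ^ K * (lam / mu1) ^ n * pi0 lam mu0 mu1 K

open Finset

theorem Summable.mul_of_abs_le {f g : ℕ → ℝ} {C : ℝ} (hf : Summable f)
    (hg : ∀ n, |g n| ≤ C) : Summable fun n => g n * f n :=
  (hf.abs.mul_left C).of_norm_bounded fun n => by
    rw [Real.norm_eq_abs, abs_mul]
    exact mul_le_mul_of_nonneg_right (hg n) (abs_nonneg _)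

theorem eq_sum_range_add_pow_mul_of_recurrence {H b : ℕ → ℝ} {r : ℝ}
    (h : ∀ m, H m = b m + r * H (m + 1)) (n : ℕ) :
    H 0 = ∑ i ∈ range n, r ^ i * b i + r ^ n * H n := by
  induction n with
  | zero => simp
  | succ n ih => rw [ih, sum_range_succ, h n]; ring

section StationaryDistribution

variable {lam mu0 mu1 : ℝ} {K : ℕ}

theorem piStat_of_le {n : ℕ} (hn : n ≤ K) :
    piStat lam mu0 mu1 K n = (lam / mu0) ^ n * pi0 lam mu0 mu1 K := by
  rw [piStat, if_pos hn]

theorem piStat_add (hmu1 : mu1 ≠ 0) (j : ℕ) :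
    piStat lam mu0 mu1 K (j + K) = (lam / mu0) ^ K * pi0 lam mu0 mu1 K * (lam / mu1) ^ j := by
  rcases j.eq_zero_or_pos with rfl | hj
  · simp [piStat_of_le]
  · have hpow : (mu1 / mu0) ^ K * (lam / mu1) ^ K = (lam / mu0) ^ K := by
      rw [← mul_pow]
      field_simp
    rw [piStat, if_neg (by omega), pow_add]
    linear_combination (lam / mu1) ^ j * pi0 lam mu0 mu1 K * hpow

theorem summable_piStat (hmu1 : mu1 ≠ 0) (hx : |lam / mu1| < 1) :
    Summable (piStat lam mu0 mu1 K) := by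
  rw [← summable_nat_add_iff K]
  simp only [piStat_add hmu1]
  exact (summable_geometric_of_abs_lt_one hx).mul_left _

theorem tsum_mul_piStat (hmu1 : mu1 ≠ 0) (hx : |lam / mu1| < 1)
    {g : ℕ → ℝ} {C : ℝ} (hg : ∀ n, |g n| ≤ C) :
    ∑' n, g n * piStat lam mu0 mu1 K n =
      pi0 lam mu0 mu1 K * ∑ n ∈ range K, (lam / mu0) ^ n * g n +
        (lam / mu0) ^ K * pi0 lam mu0 mu1 K * ∑' j, g (j + K) * (lam / mu1) ^ j := by
  rw [← ((summable_piStat hmu1 hx).mul_of_abs_le hg).sum_add_tsum_nat_add K, mul_sum,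
    ← tsum_mul_left]
  congr 1
  · refine sum_congr rfl fun n hn => ?_
    rw [piStat_of_le (mem_range.1 hn).le]
    ring
  · refine tsum_congr fun j => ?_
    rw [piStat_add hmu1]
    ring

end StationaryDistribution

section TailTransform

noncomputable def tailGF (x : ℝ) (ψ : ℕ → ℕ → ℝ) (K m : ℕ) : ℝ :=
  ∑' j, ψ (j + K + 1) m * x ^ j

variable {lam mu1 s x C : ℝ} {K : ℕ} {ψ : ℕ → ℕ → ℝ}

theorem tailGF_recurrence (hmu1 : mu1 ≠ 0) (hmu1s : mu1 + s ≠ 0) (hx : |lam / mu1| < 1)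
    (hψ : ∀ n m, |ψ n m| ≤ C)
    (hrec : ∀ n m, K ≤ n →
      (lam + mu1 + s) * ψ (n + 1) m = mu1 * ψ n m + lam * ψ (n + 1) (m + 1))
    (m : ℕ) :
    tailGF (lam / mu1) ψ K m =
      mu1 / (mu1 + s) * ψ K m + lam / (mu1 + s) * tailGF (lam / mu1) ψ K (m + 1) := by
  have hgeom := summable_geometric_of_abs_lt_one hx
  have hsum : ∀ (f : ℕ → ℕ) m, Summable fun j => ψ (f j) m * (lam / mu1) ^ j :=
    fun f m => hgeom.mul_of_abs_le fun j => hψ _ _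
  have hshift : ∑' j, ψ (j + K) m * (lam / mu1) ^ j =
      ψ K m + lam / mu1 * tailGF (lam / mu1) ψ K m := by
    rw [(hsum (· + K) m).tsum_eq_zero_add, tailGF, ← tsum_mul_left]
    simp only [zero_add, pow_zero, mul_one, pow_succ, add_right_comm _ 1 K]
    congr 1
    exact tsum_congr fun j => by ring
  have hsummed : (lam + mu1 + s) * tailGF (lam / mu1) ψ K m =
      mu1 * ∑' j, ψ (j + K) m * (lam / mu1) ^ j + lam * tailGF (lam / mu1) ψ K (m + 1) := by
    rw [tailGF, tailGF, ← tsum_mul_left, ← tsum_mul_left, ← tsum_mul_left,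
      ← ((hsum (· + K) m).mul_left _).tsum_add ((hsum (· + K + 1) (m + 1)).mul_left _)]
    refine tsum_congr fun j => ?_
    linear_combination (lam / mu1) ^ j * hrec (j + K) m (Nat.le_add_left K j)
  rw [hshift, mul_add, ← mul_assoc, mul_div_cancel₀ lam hmu1] at hsummed
  field_simp
  linear_combination hsummed

theorem tailGF_of_geometric {β : ℝ} {m : ℕ} (hψ : ∀ n, ψ n m = β ^ n)
    (hxβ : |x * β| < 1) :
    tailGF x ψ K m = β ^ (K + 1) * (1 - x * β)⁻¹ := by
  simp only [tailGF, hψ]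
  rw [← tsum_geometric_of_abs_lt_one hxβ, ← tsum_mul_left]
  exact tsum_congr fun j => by ring

end TailTransform

theorem statement6_general (lam mu0 mu1 s : ℝ) (K : ℕ)
    (hlam : 0 < lam) (hmu1 : 0 < mu1) (hs : 0 < s)
    (hstab : lam < mu1)
    (ψ : ℕ → ℕ → ℝ)
    (hgt : ∀ n m, 1 ≤ n → K < n + m →
      (lam + mu1 + s) * ψ n m = mu1 * ψ (n - 1) m + lam * ψ n (m + 1))
    (hhi : ∀ n m, K ≤ m → ψ n m = (mu1 / (mu1 + s)) ^ n)
    (hbd : ∀ n m, 0 ≤ ψ n m ∧ ψ n m ≤ 1) :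
    Summable (fun n : ℕ => ψ (n + 1) 0 * piStat lam mu0 mu1 K n) ∧
    (∑' n : ℕ, ψ (n + 1) 0 * piStat lam mu0 mu1 K n) =
      pi0 lam mu0 mu1 K *
        (∑ h ∈ Finset.range K,
          ((lam / mu0) ^ h * ψ (h + 1) 0 +
            (lam / mu0) ^ K * (lam / mu1) ^ h * (mu1 / (mu1 + s)) ^ (h + 1) * ψ K h)) +
      pi0 lam mu0 mu1 K * (lam / mu0) ^ K * (lam / mu1) ^ K * (mu1 / (mu1 - lam)) *
        (mu1 / (mu1 + s)) ^ (2 * K) * ((mu1 - lam) / (mu1 - lam + s)) := by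
  have hψ : ∀ n m, |ψ n m| ≤ 1 := fun n m => abs_le.2 ⟨by linarith [hbd n m], (hbd n m).2⟩
  have hx : |lam / mu1| < 1 := by
    rw [abs_of_pos (by positivity), div_lt_one hmu1]
    exact hstab
  have hr : lam / (mu1 + s) = lam / mu1 * (mu1 / (mu1 + s)) := by field_simp
  have hxβ : |lam / mu1 * (mu1 / (mu1 + s))| < 1 := by
    rw [← hr, abs_of_pos (by positivity), div_lt_one (by positivity)]
    linarith
  have hrec : ∀ n m, K ≤ n →
      (lam + mu1 + s) * ψ (n + 1) m = mu1 * ψ n m + lam * ψ (n + 1) (m + 1) :=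
    fun n m hn => by simpa using hgt (n + 1) m (by omega) (by omega)
  have hH0 := eq_sum_range_add_pow_mul_of_recurrence
    (tailGF_recurrence hmu1.ne' (by positivity) hx hψ hrec) K
  refine ⟨(summable_piStat hmu1.ne' hx).mul_of_abs_le fun n => hψ _ _, ?_⟩
  rw [tsum_mul_piStat hmu1.ne' hx fun n => hψ _ _, ← tailGF, hH0,
    tailGF_of_geometric (hhi · K le_rfl) hxβ, hr]
  have hconst : (1 - lam / mu1 * (mu1 / (mu1 + s)))⁻¹ * (mu1 / (mu1 + s)) =
      mu1 / (mu1 - lam) * ((mu1 - lam) / (mu1 - lam + s)) := by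
    have hgap : mu1 - lam ≠ 0 := by linarith
    have h1 : 1 - lam / mu1 * (mu1 / (mu1 + s)) = (mu1 - lam + s) / (mu1 + s) := by
      field_simp
      ring
    rw [h1, inv_div, mul_comm, div_mul_div_cancel₀ (by positivity), div_mul_div_cancel₀ hgap]
  simp only [mul_add, sum_add_distrib, mul_sum, add_assoc]
  congr 2
  · exact sum_congr rfl fun i _ => by ring
  · rw [two_mul]
    linear_combination
      (lam / mu0) ^ K * pi0 lam mu0 mu1 K * (lam / mu1) ^ K * (mu1 / (mu1 + s)) ^ (K + K) * hconst

/-- the Laplace transform of the stationary sojourn time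
(Proposition 2.2 of the paper). -/
theorem statement6 (lam mu0 mu1 s : ℝ) (K : ℕ)
    (hlam : 0 < lam) (hmu0 : 0 < mu0) (hmu1 : 0 < mu1) (hs : 0 < s) (hK : 1 ≤ K)
    (hstab : lam < mu1)
    (ψ : ℕ → ℕ → ℝ)
    (h0 : ∀ m, ψ 0 m = 1)
    (hle : ∀ n m, 1 ≤ n → n + m ≤ K →
      (lam + mu0 + s) * ψ n m = mu0 * ψ (n - 1) m + lam * ψ n (m + 1))
    (hgt : ∀ n m, 1 ≤ n → K < n + m →
      (lam + mu1 + s) * ψ n m = mu1 * ψ (n - 1) m + lam * ψ n (m + 1))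
    (hhi : ∀ n m, K ≤ m → ψ n m = (mu1 / (mu1 + s)) ^ n)
    (hbd : ∀ n m, 0 ≤ ψ n m ∧ ψ n m ≤ 1) :
    Summable (fun n : ℕ => ψ (n + 1) 0 * piStat lam mu0 mu1 K n) ∧
    (∑' n : ℕ, ψ (n + 1) 0 * piStat lam mu0 mu1 K n) =
      pi0 lam mu0 mu1 K *
        (∑ h ∈ Finset.range K,
          ((lam / mu0) ^ h * ψ (h + 1) 0 +
            (lam / mu0) ^ K * (lam / mu1) ^ h * (mu1 / (mu1 + s)) ^ (h + 1) * ψ K h)) +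
      pi0 lam mu0 mu1 K * (lam / mu0) ^ K * (lam / mu1) ^ K * (mu1 / (mu1 - lam)) *
        (mu1 / (mu1 + s)) ^ (2 * K) * ((mu1 - lam) / (mu1 - lam + s)) :=
  statement6_general lam mu0 mu1 s K hlam hmu1 hs hstab ψ hgt hhi hbd
end

section
/- Let ψ be a solution of the vector sojourn-time recursion, let Z be a 2×2 real matrix whose eigenvalues all have modulus strictly less than 1, assume T_M(s) and T_Λ(s) are invertible and every eigenvalue of T_M(s) has modulus strictly less than 1. Then for every m with 0 ≤ m ≤ K−1, φ(Z,m) = ψ(K,m)·T_M(s)·S(Z, I, T_M(s)) + Σ_{h=0}^∞ φ(T_Λ(s)·T_M(s)^h·Z·T_M(s)^{−h}·T_Λ(s)^{−1}, m+1) · T_Λ(s)·T_M(s)^h·Z^h, where all the series involved converge. -/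
noncomputable section

def Lm (lam : ℝ) : Matrix (Fin 2) (Fin 2) ℝ := !![lam, 0; 0, lam]

def Mm (mu0 mu1 : ℝ) : Matrix (Fin 2) (Fin 2) ℝ := !![mu0, 0; 0, mu1]

def G0m (gam : ℝ) : Matrix (Fin 2) (Fin 2) ℝ := !![gam, gam; 0, 0]

def G1m (gam : ℝ) : Matrix (Fin 2) (Fin 2) ℝ := !![0, 0; gam, gam]

def Hm (lam mu0 mu1 gam s : ℝ) : Matrix (Fin 2) (Fin 2) ℝ :=
  (gam + s) • (1 : Matrix (Fin 2) (Fin 2) ℝ) + Lm lam + Mm mu0 mu1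

def Tm (lam mu0 mu1 gam s : ℝ) : Matrix (Fin 2) (Fin 2) ℝ :=
  Mm mu0 mu1 * (Hm lam mu0 mu1 gam s - G1m gam - Lm lam)⁻¹

def TLm (lam mu0 mu1 gam s : ℝ) : Matrix (Fin 2) (Fin 2) ℝ :=
  Lm lam * (Hm lam mu0 mu1 gam s - G1m gam)⁻¹

def TMm (lam mu0 mu1 gam s : ℝ) : Matrix (Fin 2) (Fin 2) ℝ :=
  Mm mu0 mu1 * (Hm lam mu0 mu1 gam s - G1m gam)⁻¹

def eRow : Matrix (Fin 1) (Fin 2) ℝ := !![1, 1]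

/-- The eigenvalues (over ℂ) of a real 2×2 matrix all have modulus strictly less than 1. -/
def SpecLtOne (Z : Matrix (Fin 2) (Fin 2) ℝ) : Prop :=
  ∀ z ∈ spectrum ℂ (Z.map fun x : ℝ => (x : ℂ)), ‖z‖ < 1

/-- `ψ` is a solution of the vector sojourn-time recursion. -/
def IsVecSol (lam mu0 mu1 gam s : ℝ) (K : ℕ)
    (ψ : ℕ → ℕ → Matrix (Fin 1) (Fin 2) ℝ) : Prop :=
  (∀ m, ψ 0 m = eRow) ∧
  (∀ n m, 1 ≤ n →
    ψ n m * (Hm lam mu0 mu1 gam s - (if K < n + m then G1m gam else G0m gam)) =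
      ψ (n - 1) m * Mm mu0 mu1 + ψ n (m + 1) * Lm lam) ∧
  (∀ n m, K ≤ m → ψ n m = eRow * (Tm lam mu0 mu1 gam s) ^ n) ∧
  (∀ n m i j, 0 ≤ ψ n m i j ∧ ψ n m i j ≤ 1)

end

/-!
For `n + m > K` the recursion reads `ψ(n,m) = ψ(n-1,m) T_M + ψ(n,m+1) T_Λ`. Unrolling it from
`n = K` gives `ψ(K+h+1,m) = ψ(K,m) T_M^(h+1) + ∑_{i+j=h} ψ(K+j+1,m+1) T_Λ T_M^i`, so `φ(Z,m)`
splits into `ψ(K,m) T_M S(Z,I,T_M)` and the double series `∑_{i,j} ψ(K+j+1,m+1) T_Λ T_M^i Z^(i+j)`.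
The latter converges absolutely: `ψ` is bounded, and by Gelfand's formula `‖Z^n‖` and `‖T_M^n‖`
are summable. Summing it over `j` first and writing `P = T_Λ T_M^i`, the identity
`P Z^j = (P Z P⁻¹)^j P` turns the `i`-th column into the `i`-th term of the second series.
-/

open Filter Finset

theorem summable_norm_pow_of_spectralRadius_lt_one {A : Type*} [NormedRing A]
    [NormedAlgebra ℂ A] [CompleteSpace A] {a : A} (ha : spectralRadius ℂ a < 1) :
    Summable fun n => ‖a ^ n‖ := by
  obtain ⟨r, har, hr1⟩ := ENNReal.lt_iff_exists_nnreal_btwn.mp ha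
  refine .of_norm_bounded_eventually_nat
    (summable_geometric_of_lt_one r.2 (by exact_mod_cast hr1)) ?_
  filter_upwards [(spectrum.pow_norm_pow_one_div_tendsto_nhds_spectralRadius a).eventually_lt_const
    har, eventually_gt_atTop 0] with n hn hn0
  rw [ENNReal.ofReal_lt_iff_lt_toReal (by positivity) ENNReal.coe_ne_top, ENNReal.coe_toReal,
    one_div] at hn
  have := (Real.rpow_inv_lt_iff_of_pos (norm_nonneg (a ^ n)) r.2 (Nat.cast_pos.mpr hn0)).mp hn
  rw [norm_norm]
  exact_mod_cast this.le

theorem Summable.hasSum_sum_antidiagonal {E : Type*} [AddCommMonoid E] [TopologicalSpace E]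
    [ContinuousAdd E] [RegularSpace E] {f : ℕ × ℕ → E} (hf : Summable f) :
    HasSum (fun n => ∑ p ∈ antidiagonal n, f p) (∑' p, f p) :=
  (HasAntidiagonal.sigmaAntidiagonalEquivProd.hasSum_iff.mpr hf.hasSum).sigma fun n => by
    rw [← Finset.sum_coe_sort]
    exact hasSum_fintype _

section MatrixMul

variable {ι l m n α : Type*} [Fintype m] [Semiring α] [TopologicalSpace α]
  [IsTopologicalSemiring α]

theorem HasSum.matrix_mul_left {f : ι → Matrix m n α} {a : Matrix m n α} (hf : HasSum f a)
    (c : Matrix l m α) : HasSum (fun i => c * f i) (c * a) :=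
  hf.map (Matrix.addMonoidHomMulLeft c) (continuous_const.matrix_mul continuous_id)

theorem HasSum.matrix_mul_right {f : ι → Matrix l m α} {a : Matrix l m α} (hf : HasSum f a)
    (c : Matrix m n α) : HasSum (fun i => f i * c) (a * c) :=
  hf.map (Matrix.addMonoidHomMulRight c) (continuous_id.matrix_mul continuous_const)

end MatrixMul

namespace Matrix

variable {l n : Type*} [Fintype n] [DecidableEq n]

section Inverse

variable {α : Type*} [CommRing α]

-- `B⁻¹ = 0` when `B` is singular.
theorem isUnit_of_isUnit_mul_inv {A B : Matrix n n α} (h : IsUnit (A * B⁻¹)) : IsUnit B :=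
  isUnit_nonsing_inv_iff.mp (isUnit_of_mul_isUnit_right h)

theorem eq_mul_add_mul_of_mul_eq {x y z : Matrix l n α} {H M L : Matrix n n α} (hH : IsUnit H)
    (h : x * H = y * M + z * L) : x = y * (M * H⁻¹) + z * (L * H⁻¹) := by
  rw [← mul_nonsing_inv_cancel_right H x ((isUnit_iff_isUnit_det H).mp hH), h, Matrix.add_mul,
    Matrix.mul_assoc, Matrix.mul_assoc]

theorem conj_pow {P : Matrix n n α} (hP : IsUnit P) (Z : Matrix n n α) (k : ℕ) :
    (P * Z * P⁻¹) ^ k = P * Z ^ k * P⁻¹ := by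
  obtain ⟨U, rfl⟩ := hP
  rw [← coe_units_inv]
  exact U.conj_pow Z k

theorem mul_pow_mul_mul_inv_pow_mul_inv (A B Z : Matrix n n α) (i : ℕ) :
    B * A ^ i * Z * A⁻¹ ^ i * B⁻¹ = B * A ^ i * Z * (B * A ^ i)⁻¹ := by
  rw [mul_inv_rev, inv_pow', Matrix.mul_assoc _ _ B⁻¹]

end Inverse

section Recursion

variable {α : Type*} [Semiring α]

theorem eq_mul_pow_add_sum_antidiagonal {u w : ℕ → Matrix l n α} {A B : Matrix n n α}
    (hrec : ∀ h, u (h + 1) = u h * A + w (h + 1) * B) (h : ℕ) :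
    u (h + 1) = u 0 * A ^ (h + 1) + ∑ p ∈ antidiagonal h, w (p.2 + 1) * B * A ^ p.1 := by
  induction h with
  | zero => simp [hrec 0]
  | succ h ih =>
    rw [hrec (h + 1), ih, Nat.sum_antidiagonal_succ]
    simp only [Matrix.add_mul, Matrix.sum_mul, Matrix.mul_assoc, ← pow_succ, pow_zero,
      Matrix.mul_one]
    abel

def unrolledTerm (w : ℕ → Matrix l n α) (A B Z : Matrix n n α) (p : ℕ × ℕ) : Matrix l n α :=
  w (p.2 + 1) * B * A ^ p.1 * Z ^ (p.1 + p.2)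

theorem mul_pow_eq_add_sum_unrolledTerm {u w : ℕ → Matrix l n α} {A B : Matrix n n α}
    (hrec : ∀ h, u (h + 1) = u h * A + w (h + 1) * B) (Z : Matrix n n α) (h : ℕ) :
    u (h + 1) * Z ^ h =
      u 0 * A * (A ^ h * Z ^ h) + ∑ p ∈ antidiagonal h, unrolledTerm w A B Z p := by
  rw [eq_mul_pow_add_sum_antidiagonal hrec h, Matrix.add_mul, Matrix.sum_mul, pow_succ']
  congr 1
  · simp only [Matrix.mul_assoc]
  · refine Finset.sum_congr rfl fun p hp => ?_
    rw [unrolledTerm, mem_antidiagonal.mp hp]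

end Recursion

theorem hasSum_mul_pow_of_recursion {α : Type*} [Ring α] [TopologicalSpace α]
    [IsTopologicalRing α] {u w : ℕ → Matrix l n α} {A B Z : Matrix n n α}
    (hrec : ∀ h, u (h + 1) = u h * A + w (h + 1) * B) (hS : Summable fun h => A ^ h * Z ^ h)
    (hF : Summable (unrolledTerm w A B Z)) :
    HasSum (fun h => u (h + 1) * Z ^ h)
      (u 0 * A * ∑' h, A ^ h * Z ^ h + ∑' p, unrolledTerm w A B Z p) := by
  simp only [mul_pow_eq_add_sum_unrolledTerm hrec]
  exact (hS.hasSum.matrix_mul_left _).add hF.hasSum_sum_antidiagonal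

end Matrix

theorem IsVecSol.succ_eq_of_le {lam mu0 mu1 gam s : ℝ} {K : ℕ}
    {ψ : ℕ → ℕ → Matrix (Fin 1) (Fin 2) ℝ} (hψ : IsVecSol lam mu0 mu1 gam s K ψ)
    (hH : IsUnit (Hm lam mu0 mu1 gam s - G1m gam)) {n : ℕ} (hn : K ≤ n) (m : ℕ) :
    ψ (n + 1) m = ψ n m * TMm lam mu0 mu1 gam s + ψ (n + 1) (m + 1) * TLm lam mu0 mu1 gam s := by
  have h := hψ.2.1 (n + 1) m n.succ_pos
  rw [if_pos (by omega), Nat.add_sub_cancel] at h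
  exact Matrix.eq_mul_add_mul_of_mul_eq hH h

section LinftyOpNorm

attribute [local instance] Matrix.linftyOpSeminormedAddCommGroup
  Matrix.linftyOpNormedAddCommGroup Matrix.linftyOpNormedSpace Matrix.linftyOpNormedRing
  Matrix.linftyOpNormedAlgebra

open scoped NNReal

theorem Matrix.linfty_opNorm_map_ofReal {m n : Type*} [Fintype m] [Fintype n]
    (A : Matrix m n ℝ) : ‖A.map ((↑) : ℝ → ℂ)‖ = ‖A‖ := by
  simp [linfty_opNorm_def]

theorem Matrix.linfty_opNNNorm_le_card_mul {m n α : Type*} [Fintype m] [Fintype n]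
    [SeminormedAddCommGroup α] {A : Matrix m n α} {c : ℝ≥0} (h : ∀ i j, ‖A i j‖₊ ≤ c) :
    ‖A‖₊ ≤ Fintype.card n * c := by
  rw [linfty_opNNNorm_def]
  refine Finset.sup_le fun i _ => (Finset.sum_le_card_nsmul _ _ _ fun j _ => h i j).trans ?_
  simp

theorem SpecLtOne.summable_norm_pow {Z : Matrix (Fin 2) (Fin 2) ℝ} (hZ : SpecLtOne Z) :
    Summable fun n => ‖Z ^ n‖ := by
  have hρ : spectralRadius ℂ (Z.map ((↑) : ℝ → ℂ)) < 1 := by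
    simpa using spectrum.spectralRadius_lt_of_forall_lt _ (r := 1) fun z hz => by
      exact_mod_cast hZ z hz
  refine (summable_norm_pow_of_spectralRadius_lt_one hρ).congr fun n => ?_
  rw [← Matrix.linfty_opNorm_map_ofReal (Z ^ n)]
  exact congrArg norm (Matrix.map_pow Z Complex.ofRealHom n).symm

theorem SpecLtOne.norm_pow_le_tsum {Z : Matrix (Fin 2) (Fin 2) ℝ} (hZ : SpecLtOne Z) (i : ℕ) :
    ‖Z ^ i‖ ≤ ∑' j, ‖Z ^ j‖ :=
  hZ.summable_norm_pow.le_tsum i fun _ _ => norm_nonneg _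

theorem IsVecSol.norm_le {lam mu0 mu1 gam s : ℝ} {K : ℕ} {ψ : ℕ → ℕ → Matrix (Fin 1) (Fin 2) ℝ}
    (hψ : IsVecSol lam mu0 mu1 gam s K ψ) (n m : ℕ) : ‖ψ n m‖ ≤ 2 := by
  have hentry : ∀ i j, ‖ψ n m i j‖₊ ≤ 1 := fun i j => by
    obtain ⟨h0, h1⟩ := hψ.2.2.2 n m i j
    rw [← NNReal.coe_le_coe, coe_nnnorm, Real.norm_of_nonneg h0]
    exact_mod_cast h1
  have := Matrix.linfty_opNNNorm_le_card_mul hentry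
  norm_num at this
  exact_mod_cast this

variable {l m n : Type*} [Fintype l] [Fintype m] [Fintype n]

theorem summable_mul_of_norm_le {v : ℕ → Matrix l m ℝ} {f : ℕ → Matrix m n ℝ} {C : ℝ}
    (hv : ∀ k, ‖v k‖ ≤ C) (hf : Summable fun k => ‖f k‖) : Summable fun k => v k * f k :=
  .of_norm_bounded (hf.mul_left C) fun k =>
    (Matrix.linfty_opNorm_mul _ _).trans (mul_le_mul_of_nonneg_right (hv k) (norm_nonneg _))

variable [DecidableEq n]

theorem summable_mul_conj_pow {v : ℕ → Matrix l n ℝ} {P Z : Matrix n n ℝ} {C : ℝ}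
    (hP : IsUnit P) (hv : ∀ k, ‖v k‖ ≤ C) (hZ : Summable fun k => ‖Z ^ k‖) :
    Summable fun k => v k * (P * Z * P⁻¹) ^ k := by
  refine summable_mul_of_norm_le hv <| (hZ.mul_left (‖P‖ * ‖P⁻¹‖)).of_nonneg_of_le
    (fun _ => norm_nonneg _) fun k => ?_
  rw [Matrix.conj_pow hP]
  calc ‖P * Z ^ k * P⁻¹‖ ≤ ‖P‖ * ‖Z ^ k‖ * ‖P⁻¹‖ := norm_mul₃_le
    _ = ‖P‖ * ‖P⁻¹‖ * ‖Z ^ k‖ := by ring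

theorem summable_unrolledTerm {w : ℕ → Matrix l n ℝ} {A Z : Matrix n n ℝ} (B : Matrix n n ℝ)
    {C D : ℝ} (hw : ∀ k, ‖w k‖ ≤ C) (hA : ∀ i, ‖A ^ i‖ ≤ D) (hZ : Summable fun i => ‖Z ^ i‖) :
    Summable (Matrix.unrolledTerm w A B Z) := by
  have hC : 0 ≤ C := (norm_nonneg _).trans (hw 0)
  refine .of_norm_bounded ((hZ.mul_of_nonneg hZ (fun _ => norm_nonneg _)
    (fun _ => norm_nonneg _)).mul_left (C * ‖B‖ * D)) fun ⟨i, j⟩ => ?_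
  rw [Matrix.unrolledTerm, pow_add]
  calc ‖w (j + 1) * B * A ^ i * (Z ^ i * Z ^ j)‖
      ≤ ‖w (j + 1) * B * A ^ i‖ * ‖Z ^ i * Z ^ j‖ := Matrix.linfty_opNorm_mul _ _
    _ ≤ ‖w (j + 1)‖ * ‖B‖ * ‖A ^ i‖ * (‖Z ^ i‖ * ‖Z ^ j‖) := by
        gcongr
        · exact (Matrix.linfty_opNorm_mul _ _).trans
            (mul_le_mul_of_nonneg_right (Matrix.linfty_opNorm_mul _ _) (norm_nonneg _))
        · exact norm_mul_le _ _
    _ ≤ C * ‖B‖ * D * (‖Z ^ i‖ * ‖Z ^ j‖) := by gcongr; exacts [hw _, hA i]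

theorem hasSum_unrolledTerm_column {w : ℕ → Matrix l n ℝ} {A B Z : Matrix n n ℝ} {C : ℝ}
    (hA : IsUnit A) (hB : IsUnit B) (hw : ∀ k, ‖w k‖ ≤ C) (hZ : Summable fun k => ‖Z ^ k‖)
    (i : ℕ) :
    HasSum (fun k => Matrix.unrolledTerm w A B Z (i, k))
      ((∑' k, w (k + 1) * (B * A ^ i * Z * A⁻¹ ^ i * B⁻¹) ^ k) * (B * A ^ i * Z ^ i)) := by
  have hP : IsUnit (B * A ^ i) := hB.mul (hA.pow i)
  simp only [Matrix.mul_pow_mul_mul_inv_pow_mul_inv]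
  convert (summable_mul_conj_pow hP (fun k => hw (k + 1)) hZ).hasSum.matrix_mul_right
    (B * A ^ i * Z ^ i) using 2 with k
  rw [Matrix.conj_pow hP, Matrix.mul_assoc (w _), Matrix.mul_assoc (B * A ^ i * Z ^ k),
    Matrix.nonsing_inv_mul_cancel_left _ _ ((Matrix.isUnit_iff_isUnit_det _).mp hP),
    Matrix.mul_assoc (B * A ^ i), ← pow_add, add_comm k i, Matrix.unrolledTerm]
  simp only [Matrix.mul_assoc]

end LinftyOpNorm

theorem statement16_general (lam mu0 mu1 gam s : ℝ) (K : ℕ)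
    (ψ : ℕ → ℕ → Matrix (Fin 1) (Fin 2) ℝ)
    (hψ : IsVecSol lam mu0 mu1 gam s K ψ)
    (Z : Matrix (Fin 2) (Fin 2) ℝ)
    (hZ : SpecLtOne Z)
    (hTM : IsUnit (TMm lam mu0 mu1 gam s)) (hTL : IsUnit (TLm lam mu0 mu1 gam s))
    (hTMe : SpecLtOne (TMm lam mu0 mu1 gam s)) :
    ∀ m : ℕ, m ≤ K - 1 →
      Summable (fun h : ℕ => ψ (K + h + 1) m * Z ^ h) ∧
      Summable (fun h : ℕ =>
        (TMm lam mu0 mu1 gam s) ^ h * (1 : Matrix (Fin 2) (Fin 2) ℝ) * Z ^ h) ∧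
      (∀ h : ℕ, Summable (fun k : ℕ => ψ (K + k + 1) (m + 1) *
        (TLm lam mu0 mu1 gam s * (TMm lam mu0 mu1 gam s) ^ h * Z *
          ((TMm lam mu0 mu1 gam s)⁻¹) ^ h * (TLm lam mu0 mu1 gam s)⁻¹) ^ k)) ∧
      Summable (fun h : ℕ =>
        (∑' k : ℕ, ψ (K + k + 1) (m + 1) *
          (TLm lam mu0 mu1 gam s * (TMm lam mu0 mu1 gam s) ^ h * Z *
            ((TMm lam mu0 mu1 gam s)⁻¹) ^ h * (TLm lam mu0 mu1 gam s)⁻¹) ^ k) *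
          (TLm lam mu0 mu1 gam s * (TMm lam mu0 mu1 gam s) ^ h * Z ^ h)) ∧
      (∑' h : ℕ, ψ (K + h + 1) m * Z ^ h) =
        ψ K m * TMm lam mu0 mu1 gam s *
          (∑' h : ℕ,
            (TMm lam mu0 mu1 gam s) ^ h * (1 : Matrix (Fin 2) (Fin 2) ℝ) * Z ^ h) +
        ∑' h : ℕ,
          (∑' k : ℕ, ψ (K + k + 1) (m + 1) *
            (TLm lam mu0 mu1 gam s * (TMm lam mu0 mu1 gam s) ^ h * Z *
              ((TMm lam mu0 mu1 gam s)⁻¹) ^ h * (TLm lam mu0 mu1 gam s)⁻¹) ^ k) *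
            (TLm lam mu0 mu1 gam s * (TMm lam mu0 mu1 gam s) ^ h * Z ^ h) := by
  intro m _
  have hrec (h : ℕ) :=
    hψ.succ_eq_of_le (Matrix.isUnit_of_isUnit_mul_inv hTM) (K.le_add_right h) m
  have hw (k : ℕ) := hψ.norm_le (K + k) (m + 1)
  have hZs := hZ.summable_norm_pow
  have hA := hTMe.norm_pow_le_tsum
  have hS := summable_mul_of_norm_le hA hZs
  have hF := summable_unrolledTerm (TLm lam mu0 mu1 gam s) hw hA hZs
  have hrows := Matrix.hasSum_mul_pow_of_recursion (u := fun h => ψ (K + h) m) hrec hS hF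
  have hcols := hF.hasSum.prod_fiberwise (hasSum_unrolledTerm_column hTM hTL hw hZs)
  simp only [Matrix.mul_one]
  refine ⟨hrows.summable, hS, fun h => ?_, hcols.summable,
    hrows.tsum_eq.trans (congrArg (_ + ·) hcols.tsum_eq.symm)⟩
  rw [Matrix.mul_pow_mul_mul_inv_pow_mul_inv]
  exact summable_mul_conj_pow (hTL.mul (hTM.pow h)) (fun k => hw (k + 1)) hZs

/-- the iterated recursion (3.19) for the matrix generating function,
with S(Z,A,B) = Σ_h B^h·A·Z^h; all series involved converge. -/
theorem statement16 (lam mu0 mu1 gam s : ℝ) (K : ℕ)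
    (hlam : 0 < lam) (hmu0 : 0 < mu0) (hmu1 : 0 < mu1) (hgam : 0 < gam) (hs : 0 < s)
    (hK : 1 ≤ K)
    (ψ : ℕ → ℕ → Matrix (Fin 1) (Fin 2) ℝ)
    (hψ : IsVecSol lam mu0 mu1 gam s K ψ)
    (Z : Matrix (Fin 2) (Fin 2) ℝ)
    (hZ : SpecLtOne Z)
    (hTM : IsUnit (TMm lam mu0 mu1 gam s)) (hTL : IsUnit (TLm lam mu0 mu1 gam s))
    (hTMe : SpecLtOne (TMm lam mu0 mu1 gam s)) :
    ∀ m : ℕ, m ≤ K - 1 →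
      Summable (fun h : ℕ => ψ (K + h + 1) m * Z ^ h) ∧
      Summable (fun h : ℕ =>
        (TMm lam mu0 mu1 gam s) ^ h * (1 : Matrix (Fin 2) (Fin 2) ℝ) * Z ^ h) ∧
      (∀ h : ℕ, Summable (fun k : ℕ => ψ (K + k + 1) (m + 1) *
        (TLm lam mu0 mu1 gam s * (TMm lam mu0 mu1 gam s) ^ h * Z *
          ((TMm lam mu0 mu1 gam s)⁻¹) ^ h * (TLm lam mu0 mu1 gam s)⁻¹) ^ k)) ∧
      Summable (fun h : ℕ =>
        (∑' k : ℕ, ψ (K + k + 1) (m + 1) *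
          (TLm lam mu0 mu1 gam s * (TMm lam mu0 mu1 gam s) ^ h * Z *
            ((TMm lam mu0 mu1 gam s)⁻¹) ^ h * (TLm lam mu0 mu1 gam s)⁻¹) ^ k) *
          (TLm lam mu0 mu1 gam s * (TMm lam mu0 mu1 gam s) ^ h * Z ^ h)) ∧
      (∑' h : ℕ, ψ (K + h + 1) m * Z ^ h) =
        ψ K m * TMm lam mu0 mu1 gam s *
          (∑' h : ℕ,
            (TMm lam mu0 mu1 gam s) ^ h * (1 : Matrix (Fin 2) (Fin 2) ℝ) * Z ^ h) +
        ∑' h : ℕ,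
          (∑' k : ℕ, ψ (K + k + 1) (m + 1) *
            (TLm lam mu0 mu1 gam s * (TMm lam mu0 mu1 gam s) ^ h * Z *
              ((TMm lam mu0 mu1 gam s)⁻¹) ^ h * (TLm lam mu0 mu1 gam s)⁻¹) ^ k) *
            (TLm lam mu0 mu1 gam s * (TMm lam mu0 mu1 gam s) ^ h * Z ^ h) :=
  statement16_general lam mu0 mu1 gam s K ψ hψ Z hZ hTM hTL hTMe
end
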